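/- Let C be a d-circuit and u an internal ∪-gate of C that is not the output. Then the disjoint union over ingoing edges i of u of R(i) equals the disjoint union over outgoing edges o of u of R(o), where R(e) is the set of tuples of R(C) whose proof-tree contains edge e. Moreover both unions are disjoint. -/

import Mathlib

open Finset

/-- Labels of gates in a `{∪,×}`-circuit: inputs `x/d`, union gates, product gates. -/
inductive GLabel (X D : Type) where
  | inp (x : X) (d : D)
  | union
  | prod

/-- Restriction of a (partial) tuple to a set of attributes. -/
def restrictTup {X D : Type} [DecidableEq X] (τ : X → Option D) (A : Finset X) :
    X → Option D :=
  fun x => if x ∈ A then τ x else none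

/-- A `{∪,×}`-circuit on attributes `X` and domain `D`: a finite DAG whose leaves are
labeled by singleton relations `x/d`, internal gates by `∪` or `×` (with the syntactic
restrictions on attribute sets), together with its semantics `rel`. -/
structure Circuit (X D : Type) [Fintype X] [Fintype D] [DecidableEq X] [DecidableEq D] where
  Gate : Type
  fg : Fintype Gate
  dg : DecidableEq Gate
  children : Gate → Finset Gate
  label : Gate → GLabel X D
  output : Gate
  attrs : Gate → Finset X
  rel : Gate → Finset (X → Option D)
  depth : Gate → ℕ
  depth_lt : ∀ u, ∀ c ∈ children u, depth c < depth u
  inp_no_children : ∀ u x d, label u = .inp x d → children u = ∅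
  internal_children_nonempty :
    ∀ u, (label u = .union ∨ label u = .prod) → (children u).Nonempty
  attrs_inp : ∀ u x d, label u = .inp x d → attrs u = {x}
  attrs_internal :
    ∀ u, (label u = .union ∨ label u = .prod) → attrs u = (children u).biUnion attrs
  union_attrs : ∀ u, label u = .union → ∀ c ∈ children u, attrs c = attrs u
  prod_attrs : ∀ u, label u = .prod →
    ∀ c₁ ∈ children u, ∀ c₂ ∈ children u, c₁ ≠ c₂ → Disjoint (attrs c₁) (attrs c₂)
  rel_support : ∀ u, ∀ τ ∈ rel u, ∀ x, (τ x).isSome ↔ x ∈ attrs u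
  rel_inp : ∀ u x d, label u = .inp x d →
    ∀ τ, τ ∈ rel u ↔ τ = (fun y => if y = x then some d else none)
  rel_union : ∀ u, label u = .union → ∀ τ, τ ∈ rel u ↔ ∃ c ∈ children u, τ ∈ rel c
  rel_prod : ∀ u, label u = .prod →
    ∀ τ, τ ∈ rel u ↔ ((∀ x, (τ x).isSome ↔ x ∈ attrs u) ∧
      ∀ c ∈ children u, restrictTup τ (attrs c) ∈ rel c)

attribute [instance] Circuit.fg Circuit.dg

namespace Circuit

variable {X D : Type} [Fintype X] [Fintype D] [DecidableEq X] [DecidableEq D]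

/-- A d-circuit: every `∪`-gate is disjoint (its children define pairwise
disjoint relations). -/
def DisjointUnions (C : Circuit X D) : Prop :=
  ∀ u, C.label u = .union → ∀ c₁ ∈ C.children u, ∀ c₂ ∈ C.children u,
    c₁ ≠ c₂ → Disjoint (C.rel c₁) (C.rel c₂)

/-- The gates of the proof-tree of a tuple `τ`: the output gate is in, and a child `u`
of an included gate `v` is included iff the restriction of `τ` to the attributes of
the subcircuit rooted at `u` belongs to the relation of `u`. -/
inductive InPT (C : Circuit X D) (τ : X → Option D) : C.Gate → Prop
  | out : InPT C τ C.output
  | step {u v : C.Gate} : InPT C τ v → u ∈ C.children v →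
      restrictTup τ (C.attrs u) ∈ C.rel u → InPT C τ u

/-- An edge `e = (u, v)` (from child `u` to parent `v`) belongs to the proof-tree
of `τ`. -/
def EdgeInPT (C : Circuit X D) (τ : X → Option D) (e : C.Gate × C.Gate) : Prop :=
  C.InPT τ e.2 ∧ e.1 ∈ C.children e.2 ∧ restrictTup τ (C.attrs e.1) ∈ C.rel e.1

/-- The edges of the circuit, directed from child to parent. -/
def edges (C : Circuit X D) : Finset (C.Gate × C.Gate) :=
  Finset.univ.filter (fun e => e.1 ∈ C.children e.2)

/-- Outgoing edges of a gate `u` (towards its parents). -/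
def outEdges (C : Circuit X D) (u : C.Gate) : Finset (C.Gate × C.Gate) :=
  C.edges.filter (fun e => e.1 = u)

/-- Ingoing edges of a gate `u` (from its children). -/
def inEdges (C : Circuit X D) (u : C.Gate) : Finset (C.Gate × C.Gate) :=
  C.edges.filter (fun e => e.2 = u)

open Classical in
/-- `R(e)`: the set of tuples of `R(C)` whose proof-tree contains the edge `e`. -/
noncomputable def relEdge (C : Circuit X D) (e : C.Gate × C.Gate) :
    Finset (X → Option D) :=
  (C.rel C.output).filter (fun τ => C.EdgeInPT τ e)

/-- Soundness of an edge-weighting: flow conservation at non-output `∪`-gates, and at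
`×`-gates all ingoing edges carry the same weight, which (for non-output gates)
equals the sum of the outgoing weights. -/
def Sound (C : Circuit X D) (W : C.Gate × C.Gate → ℝ) : Prop :=
  (∀ u, C.label u = .union → u ≠ C.output →
      ∑ i ∈ C.inEdges u, W i = ∑ o ∈ C.outEdges u, W o) ∧
  (∀ u, C.label u = .prod →
      (∀ i ∈ C.inEdges u, ∀ i' ∈ C.inEdges u, W i = W i') ∧
      (u ≠ C.output → ∀ i ∈ C.inEdges u, W i = ∑ o ∈ C.outEdges u, W o))

end Circuit

/-!
A tuple of `R(i)` for an ingoing edge `i = (c, u)` makes `u` accept it, and since `u` is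
not the output it has a parent in the proof-tree, which gives an outgoing edge; conversely a
`∪`-gate that accepts a tuple has an accepting child. Ingoing edges carry disjoint sets since
the children of a disjoint `∪`-gate accept disjoint relations over the same attributes.

For outgoing edges the proof-tree must really be a tree. Two distinct accepting children of a
gate have disjoint attribute sets (by disjointness at `∪`-gates, by decomposability at
`×`-gates), so two accepting downward paths that end at parents of the same gate `u` cannot
branch: both branches would contain the nonempty attribute set of `u`.
-/

namespace Circuit

variable {X D : Type} [Fintype X] [Fintype D] [DecidableEq X] [DecidableEq D]
  (C : Circuit X D)

def Accepts (τ : X → Option D) (u : C.Gate) : Prop :=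
  restrictTup τ (C.attrs u) ∈ C.rel u

def AcceptingChild (τ : X → Option D) (v u : C.Gate) : Prop :=
  u ∈ C.children v ∧ C.Accepts τ u

lemma label_internal_of_mem_children {c u : C.Gate} (hc : c ∈ C.children u) :
    C.label u = .union ∨ C.label u = .prod := by
  cases hl : C.label u with
  | inp x d => simp [C.inp_no_children u x d hl] at hc
  | union => exact Or.inl rfl
  | prod => exact Or.inr rfl

lemma attrs_subset_of_mem_children {c u : C.Gate} (hc : c ∈ C.children u) :
    C.attrs c ⊆ C.attrs u := by
  rw [C.attrs_internal u (C.label_internal_of_mem_children hc)]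
  exact Finset.subset_biUnion_of_mem C.attrs hc

lemma attrs_nonempty (u : C.Gate) : (C.attrs u).Nonempty := by
  cases hl : C.label u with
  | inp x d => simp [C.attrs_inp u x d hl]
  | union | prod =>
    have hinternal : C.label u = .union ∨ C.label u = .prod := by simp [hl]
    obtain ⟨c, hc⟩ := C.internal_children_nonempty u hinternal
    exact (attrs_nonempty c).mono (C.attrs_subset_of_mem_children hc)
termination_by C.depth u
decreasing_by all_goals exact C.depth_lt u c hc

lemma not_disjoint_attrs_of_subset {u a b : C.Gate} (ha : C.attrs u ⊆ C.attrs a)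
    (hb : C.attrs u ⊆ C.attrs b) : ¬Disjoint (C.attrs a) (C.attrs b) := fun hab =>
  (C.attrs_nonempty u).ne_empty (disjoint_self.1 (hab.mono ha hb))

lemma accepts_child_iff_of_union {τ : X → Option D} {u c : C.Gate}
    (hu : C.label u = .union) (hc : c ∈ C.children u) :
    C.Accepts τ c ↔ restrictTup τ (C.attrs u) ∈ C.rel c := by
  rw [Accepts, C.union_attrs u hu c hc]

lemma accepts_union_iff {τ : X → Option D} {u : C.Gate} (hu : C.label u = .union) :
    C.Accepts τ u ↔ ∃ c, C.AcceptingChild τ u c := by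
  simp only [Accepts, C.rel_union u hu, AcceptingChild]
  exact exists_congr fun c => and_congr_right fun hc => (C.accepts_child_iff_of_union hu hc).symm

variable {C}

lemma DisjointUnions.eq_of_acceptingChild (hd : C.DisjointUnions) {τ : X → Option D}
    {u c₁ c₂ : C.Gate} (hu : C.label u = .union) (h₁ : C.AcceptingChild τ u c₁)
    (h₂ : C.AcceptingChild τ u c₂) : c₁ = c₂ := by
  by_contra hne
  exact Finset.disjoint_left.1 (hd u hu c₁ h₁.1 c₂ h₂.1 hne)
    ((C.accepts_child_iff_of_union hu h₁.1).1 h₁.2)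
    ((C.accepts_child_iff_of_union hu h₂.1).1 h₂.2)

lemma DisjointUnions.disjoint_attrs_of_acceptingChild (hd : C.DisjointUnions)
    {τ : X → Option D} {u c₁ c₂ : C.Gate} (h₁ : C.AcceptingChild τ u c₁)
    (h₂ : C.AcceptingChild τ u c₂) (hne : c₁ ≠ c₂) : Disjoint (C.attrs c₁) (C.attrs c₂) := by
  rcases C.label_internal_of_mem_children h₁.1 with hu | hu
  · exact absurd (hd.eq_of_acceptingChild hu h₁ h₂) hne
  · exact C.prod_attrs u hu c₁ h₁.1 c₂ h₂.1 hne

section AcceptingPaths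

variable {τ : X → Option D} {a b : C.Gate}

open Relation

lemma attrs_subset_of_reflTransGen (h : ReflTransGen (C.AcceptingChild τ) a b) :
    C.attrs b ⊆ C.attrs a := by
  induction h with
  | refl => exact subset_rfl
  | tail _ hc ih => exact (C.attrs_subset_of_mem_children hc.1).trans ih

lemma depth_le_of_reflTransGen (h : ReflTransGen (C.AcceptingChild τ) a b) :
    C.depth b ≤ C.depth a := by
  induction h with
  | refl => exact le_rfl
  | tail _ hc ih => exact (C.depth_lt _ _ hc.1).le.trans ih

lemma InPT.reflTransGen_output (h : C.InPT τ a) :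
    ReflTransGen (C.AcceptingChild τ) C.output a := by
  induction h with
  | out => exact .refl
  | step _ hc hacc ih => exact ih.tail ⟨hc, hacc⟩

lemma DisjointUnions.not_reflTransGen_parent (hd : C.DisjointUnions) {c u v : C.Gate}
    (hc : C.AcceptingChild τ a c) (hu : C.AcceptingChild τ a u) (huv : u ∈ C.children v)
    (hcv : ReflTransGen (C.AcceptingChild τ) c v) : False := by
  by_cases hcu : c = u
  · subst hcu
    exact (C.depth_lt _ _ huv).not_ge (C.depth_le_of_reflTransGen hcv)
  · exact C.not_disjoint_attrs_of_subset
      ((C.attrs_subset_of_mem_children huv).trans (C.attrs_subset_of_reflTransGen hcv))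
      subset_rfl (hd.disjoint_attrs_of_acceptingChild hc hu hcu)

lemma DisjointUnions.eq_of_reflTransGen_of_mem_children (hd : C.DisjointUnions)
    {u v₁ v₂ : C.Gate} (hu : C.Accepts τ u) (hu₁ : u ∈ C.children v₁)
    (hu₂ : u ∈ C.children v₂) (h₁ : ReflTransGen (C.AcceptingChild τ) a v₁)
    (h₂ : ReflTransGen (C.AcceptingChild τ) a v₂) : v₁ = v₂ := by
  induction h₁ using ReflTransGen.head_induction_on generalizing v₂ with
  | refl =>
    obtain rfl | ⟨c, hc, hcv⟩ := ReflTransGen.cases_head_iff.1 h₂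
    · rfl
    · exact (hd.not_reflTransGen_parent hc ⟨hu₁, hu⟩ hu₂ hcv).elim
  | head hac₁ hcv₁ ih =>
    obtain rfl | ⟨c₂, hac₂, hcv₂⟩ := ReflTransGen.cases_head_iff.1 h₂
    · exact (hd.not_reflTransGen_parent hac₁ ⟨hu₂, hu⟩ hu₁ hcv₁).elim
    rename_i c₁
    by_cases hc : c₁ = c₂
    · exact ih hu₂ (hc ▸ hcv₂)
    · exact (C.not_disjoint_attrs_of_subset
        ((C.attrs_subset_of_mem_children hu₁).trans (C.attrs_subset_of_reflTransGen hcv₁))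
        ((C.attrs_subset_of_mem_children hu₂).trans (C.attrs_subset_of_reflTransGen hcv₂))
        (hd.disjoint_attrs_of_acceptingChild hac₁ hac₂ hc)).elim

end AcceptingPaths

lemma InPT.exists_parent {τ : X → Option D} {v : C.Gate} (h : C.InPT τ v)
    (hv : v ≠ C.output) : ∃ p, C.InPT τ p ∧ C.AcceptingChild τ p v := by
  cases h with
  | out => exact absurd rfl hv
  | step hp hc hacc => exact ⟨_, hp, hc, hacc⟩

lemma mem_relEdge {τ : X → Option D} {e : C.Gate × C.Gate} :
    τ ∈ C.relEdge e ↔ τ ∈ C.rel C.output ∧ C.InPT τ e.2 ∧ C.AcceptingChild τ e.2 e.1 := by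
  classical
  unfold relEdge
  exact Finset.mem_filter

lemma mem_inEdges {u : C.Gate} {e : C.Gate × C.Gate} :
    e ∈ C.inEdges u ↔ e.1 ∈ C.children u ∧ e.2 = u := by
  simp only [inEdges, edges, Finset.mem_filter, Finset.mem_univ, true_and]
  exact ⟨fun ⟨hc, he⟩ => ⟨he ▸ hc, he⟩, fun ⟨hc, he⟩ => ⟨he ▸ hc, he⟩⟩

lemma mem_outEdges {u : C.Gate} {e : C.Gate × C.Gate} :
    e ∈ C.outEdges u ↔ u ∈ C.children e.2 ∧ e.1 = u := by
  simp only [outEdges, edges, Finset.mem_filter, Finset.mem_univ, true_and]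
  exact ⟨fun ⟨hc, he⟩ => ⟨he ▸ hc, he⟩, fun ⟨hc, he⟩ => ⟨he ▸ hc, he⟩⟩

lemma biUnion_relEdge_inEdges_eq_outEdges {u : C.Gate} (hu : C.label u = .union)
    (hout : u ≠ C.output) :
    (C.inEdges u).biUnion C.relEdge = (C.outEdges u).biUnion C.relEdge := by
  ext τ
  simp only [Finset.mem_biUnion, Prod.exists, mem_inEdges, mem_outEdges, mem_relEdge]
  constructor
  · rintro ⟨c, w, ⟨-, rfl⟩, hτ, hw, hc⟩
    obtain ⟨p, hp, hwp⟩ := hw.exists_parent hout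
    exact ⟨w, p, ⟨hwp.1, rfl⟩, hτ, hp, hwp.1, (C.accepts_union_iff hu).2 ⟨c, hc⟩⟩
  · rintro ⟨w, p, ⟨-, rfl⟩, hτ, hp, hwp⟩
    obtain ⟨c, hc⟩ := (C.accepts_union_iff hu).1 hwp.2
    exact ⟨c, w, ⟨hc.1, rfl⟩, hτ, hp.step hwp.1 hwp.2, hc⟩

lemma DisjointUnions.pairwiseDisjoint_relEdge_inEdges (hd : C.DisjointUnions) {u : C.Gate}
    (hu : C.label u = .union) : (C.inEdges u : Set (C.Gate × C.Gate)).PairwiseDisjoint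
      C.relEdge := by
  rintro ⟨c₁, w₁⟩ he₁ ⟨c₂, w₂⟩ he₂ hne
  obtain ⟨-, h₁ : w₁ = u⟩ := mem_inEdges.1 he₁
  obtain ⟨-, h₂ : w₂ = u⟩ := mem_inEdges.1 he₂
  subst h₁ h₂
  refine Finset.disjoint_left.2 fun τ hτ₁ hτ₂ => hne ?_
  exact Prod.ext (hd.eq_of_acceptingChild hu (mem_relEdge.1 hτ₁).2.2 (mem_relEdge.1 hτ₂).2.2) rfl

lemma DisjointUnions.pairwiseDisjoint_relEdge_outEdges (hd : C.DisjointUnions) (u : C.Gate) :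
    (C.outEdges u : Set (C.Gate × C.Gate)).PairwiseDisjoint C.relEdge := by
  rintro ⟨w₁, v₁⟩ he₁ ⟨w₂, v₂⟩ he₂ hne
  obtain ⟨-, h₁ : w₁ = u⟩ := mem_outEdges.1 he₁
  obtain ⟨-, h₂ : w₂ = u⟩ := mem_outEdges.1 he₂
  subst h₁ h₂
  refine Finset.disjoint_left.2 fun τ hτ₁ hτ₂ => hne ?_
  obtain ⟨-, hp₁, hu₁⟩ := mem_relEdge.1 hτ₁
  obtain ⟨-, hp₂, hu₂⟩ := mem_relEdge.1 hτ₂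
  exact Prod.ext rfl (hd.eq_of_reflTransGen_of_mem_children hu₁.2 hu₁.1 hu₂.1
    hp₁.reflTransGen_output hp₂.reflTransGen_output)

end Circuit

/-- For an internal (non-output) `∪`-gate `u` of a d-circuit, the disjoint union over
ingoing edges `i` of `R(i)` equals the disjoint union over outgoing edges `o` of
`R(o)`, and both unions are disjoint. -/
theorem unionGate_inEdges_eq_outEdges {X D : Type} [Fintype X] [Fintype D]
    [DecidableEq X] [DecidableEq D]
    (C : Circuit X D) (hd : C.DisjointUnions)
    (u : C.Gate) (hlab : C.label u = GLabel.union) (hout : u ≠ C.output) :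
    (C.inEdges u).biUnion C.relEdge = (C.outEdges u).biUnion C.relEdge ∧
    (∀ e₁ ∈ C.inEdges u, ∀ e₂ ∈ C.inEdges u, e₁ ≠ e₂ →
      Disjoint (C.relEdge e₁) (C.relEdge e₂)) ∧
    (∀ e₁ ∈ C.outEdges u, ∀ e₂ ∈ C.outEdges u, e₁ ≠ e₂ →
      Disjoint (C.relEdge e₁) (C.relEdge e₂)) :=
  ⟨C.biUnion_relEdge_inEdges_eq_outEdges hlab hout,
    fun _ h₁ _ h₂ hne => hd.pairwiseDisjoint_relEdge_inEdges hlab h₁ h₂ hne,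
    fun _ h₁ _ h₂ hne => hd.pairwiseDisjoint_relEdge_outEdges u h₁ h₂ hne⟩
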